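/- arXiv:0709.1269 — 2 statements merged into one kernel-verified Lean document; each statement's English description precedes it below -/
import Mathlib

section
/- Let Z be a multiaffine real polynomial with positive coefficients in y_1,...,y_m. Suppose that for every index e, both Z_e and Z^e have the strong Rayleigh property, and that for some fixed pair {e,f}, ΔZ{e,f} ≥ 0 for all real values of the remaining variables. Then Z has the strong Rayleigh property, i.e., ΔZ{g,h} ≥ 0 for all real values of the variables, for every pair of indices {g,h}. -/
open MvPolynomial

/-- The deletion `Z^e`: the polynomial `Z` with `y_e` set to `0`. -/
noncomputable def del {m : ℕ} (e : Fin m) (Z : MvPolynomial (Fin m) ℝ) : MvPolynomial (Fin m) ℝ :=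
  aeval (fun i => if i = e then (0 : MvPolynomial (Fin m) ℝ) else X i) Z

/-- Multiaffine: every variable occurs to at most the first power. -/
def Multiaffine {m : ℕ} (Z : MvPolynomial (Fin m) ℝ) : Prop :=
  ∀ e : Fin m, Z.degreeOf e ≤ 1

/-- The Rayleigh difference `ΔZ{e,f} = Z_e Z_f - Z_{ef} Z`. -/
noncomputable def Ray {m : ℕ} (e f : Fin m) (Z : MvPolynomial (Fin m) ℝ) : MvPolynomial (Fin m) ℝ :=
  pderiv e Z * pderiv f Z - pderiv f (pderiv e Z) * Z


/-- The strong Rayleigh property: all Rayleigh differences are nonnegative at all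
real points. -/
def StrongRayleigh {m : ℕ} (Z : MvPolynomial (Fin m) ℝ) : Prop :=
  ∀ e f : Fin m, e ≠ f → ∀ y : Fin m → ℝ, 0 ≤ eval y (Ray e f Z)

/-!
Fix distinct `a, b, c`. Since `Z` is affine in `y_a`, the difference `ΔZ{b,c}` is a quadratic
polynomial in `y_a` whose leading coefficient is `Δ(Z_a){b,c}` and whose constant term is
`Δ(Z^a){b,c}`; both are nonnegative by hypothesis. Its discriminant is Cayley's hyperdeterminant
of the `2 × 2 × 2` array of coefficients of `Z` in `y_a, y_b, y_c`, which is symmetric in the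
three indices, so it is also the discriminant of `ΔZ{a,b}` as a quadratic in `y_c`, and that one
is `≤ 0` as soon as `ΔZ{a,b} ≥ 0`. Hence `ΔZ{a,b} ≥ 0` implies `ΔZ{b,c} ≥ 0`; exchanging one
index at a time carries nonnegativity from `{e,f}` to every pair.
-/

namespace MvPolynomial

variable {σ R : Type*}

theorem pderiv_comm [CommRing R] (i j : σ) (p : MvPolynomial σ R) :
    pderiv i (pderiv j p) = pderiv j (pderiv i p) := by
  have h : ⁅pderiv i, pderiv j⁆ = (0 : Derivation R (MvPolynomial σ R) (MvPolynomial σ R)) :=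
    derivation_ext fun k => by
      classical
      rw [Derivation.commutator_apply, Derivation.zero_apply]
      simp only [pderiv_X, Pi.single_apply]
      split_ifs <;> simp
  exact sub_eq_zero.mp (congrArg (· p) h)

variable [CommSemiring R]

theorem add_single_mem_support_of_mem_support_pderiv {i : σ} {p : MvPolynomial σ R}
    {d : σ →₀ ℕ} (hd : d ∈ (pderiv i p).support) : d + Finsupp.single i 1 ∈ p.support := by
  classical
  rw [mem_support_iff] at hd ⊢
  intro h0
  simp [coeff_pderiv, h0] at hd

theorem degreeOf_pderiv_le (i j : σ) (p : MvPolynomial σ R) :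
    degreeOf j (pderiv i p) ≤ degreeOf j p :=
  degreeOf_le_iff.mpr fun d hd =>
    calc d j ≤ (d + Finsupp.single i 1 : σ →₀ ℕ) j := by simp
      _ ≤ degreeOf j p :=
        monomial_le_degreeOf j (add_single_mem_support_of_mem_support_pderiv hd)

theorem notMem_vars_pderiv_self {i : σ} {p : MvPolynomial σ R} (hp : degreeOf i p ≤ 1) :
    i ∉ (pderiv i p).vars := by
  rw [mem_vars_iff_degreeOf_ne_zero, not_not, ← Nat.le_zero]
  refine degreeOf_le_iff.mpr fun d hd => ?_
  have := monomial_le_degreeOf i (add_single_mem_support_of_mem_support_pderiv hd)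
  simp only [Finsupp.add_apply, Finsupp.single_eq_same] at this
  omega

theorem notMem_vars_of_pderiv_eq_zero [NoZeroDivisors R] [CharZero R] {i : σ}
    {p : MvPolynomial σ R} (hp : pderiv i p = 0) : i ∉ p.vars := by
  classical
  rw [mem_vars_iff_mem_support]
  rintro ⟨d, hd, hid⟩
  have hle : Finsupp.single i 1 ≤ d :=
    Finsupp.single_le_iff.mpr (Nat.one_le_iff_ne_zero.mpr (Finsupp.mem_support_iff.mp hid))
  have := congrArg (coeff (d - Finsupp.single i 1)) hp
  rw [coeff_pderiv, tsub_add_cancel_of_le hle, coeff_zero] at this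
  exact mul_ne_zero (mem_support_iff.mp hd) (Nat.cast_add_one_ne_zero _) this

theorem eval_congr_of_vars {p : MvPolynomial σ R} {x x' : σ → R}
    (h : ∀ j ∈ p.vars, x j = x' j) : eval x p = eval x' p :=
  Finset.sum_congr rfl fun d hd => congrArg _ (Finset.prod_congr rfl fun j hj => by
    simp only [h j ((mem_vars_iff_mem_support j).mpr ⟨d, hd, hj⟩)])

theorem eval_update_of_notMem_vars [DecidableEq σ] {i : σ} {p : MvPolynomial σ R}
    (hp : i ∉ p.vars) (x : σ → R) (t : R) : eval (Function.update x i t) p = eval x p :=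
  eval_congr_of_vars fun _ hj => Function.update_of_ne (ne_of_mem_of_not_mem hj hp) _ _

theorem eval_update_monomial_of_le_one [DecidableEq σ] {i : σ} {d : σ →₀ ℕ} (hd : d i ≤ 1)
    (c : R) {x : σ → R} (hx : x i = 0) (t : R) :
    eval (Function.update x i t) (monomial d c) =
      eval x (monomial d c) + t * eval x (pderiv i (monomial d c)) := by
  have hM : i ∉ (monomial (d.erase i) c).vars := by
    rw [mem_vars_iff_mem_support]
    rintro ⟨e, he, hie⟩
    rw [Finset.mem_singleton.mp (support_monomial_subset he)] at hie
    simp at hie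
  rw [← Finsupp.erase_add_single i d, monomial_add_single]
  rcases Nat.le_one_iff_eq_zero_or_eq_one.mp hd with h | h <;> rw [h] <;>
    simp [pderiv_eq_zero_of_notMem_vars hM, eval_update_of_notMem_vars hM, hx, mul_comm]

theorem eval_update_of_degreeOf_le_one [DecidableEq σ] {i : σ} {p : MvPolynomial σ R}
    (hp : degreeOf i p ≤ 1) {x : σ → R} (hx : x i = 0) (t : R) :
    eval (Function.update x i t) p = eval x p + t * eval x (pderiv i p) := by
  conv_lhs => rw [p.as_sum]
  conv_rhs => rw [p.as_sum]
  simp only [map_sum, Finset.mul_sum, ← Finset.sum_add_distrib]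
  exact Finset.sum_congr rfl fun d hd =>
    eval_update_monomial_of_le_one ((monomial_le_degreeOf i hd).trans hp) _ hx t

end MvPolynomial

theorem quadratic_nonneg_of_discrim_nonpos {K : Type*} [Field K] [LinearOrder K]
    [IsStrictOrderedRing K] {a b c : K} (ha : 0 ≤ a) (hc : 0 ≤ c) (hd : discrim a b c ≤ 0)
    (x : K) : 0 ≤ a * (x * x) + b * x + c := by
  rw [discrim] at hd
  rcases ha.eq_or_lt with rfl | ha
  · have hb : b = 0 := by nlinarith [sq_nonneg b]
    simpa [hb] using hc
  · nlinarith [sq_nonneg (2 * a * x + b)]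

/-- Here `s_S` stands for `∂^S Z` at a point with `y_a = y_b = y_c = 0`: the hypothesis `h` is
`ΔZ{a,b}` as a function of `y_c`, the conclusion is `ΔZ{b,c}` as a function of `y_a`. -/
theorem rayleigh_quadratic_nonneg {s sa sb sc sab sac sbc sabc : ℝ}
    (h : ∀ v, 0 ≤ (sa + v * sac) * (sb + v * sbc) - (sab + v * sabc) * (s + v * sc))
    (hα : 0 ≤ sab * sac - sabc * sa) (hγ : 0 ≤ sb * sc - sbc * s) (t : ℝ) :
    0 ≤ (sb + t * sab) * (sc + t * sac) - (sbc + t * sabc) * (s + t * sa) := by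
  have hdisc : discrim (sac * sbc - sabc * sc) (sa * sbc + sb * sac - sab * sc - sabc * s)
      (sa * sb - sab * s) ≤ 0 :=
    discrim_le_zero fun v => (h v).trans_eq (by ring)
  have hcayley : discrim (sab * sac - sabc * sa) (sb * sac + sc * sab - sbc * sa - sabc * s)
      (sb * sc - sbc * s) =
      discrim (sac * sbc - sabc * sc) (sa * sbc + sb * sac - sab * sc - sabc * s)
        (sa * sb - sab * s) := by
    unfold discrim
    ring
  exact (quadratic_nonneg_of_discrim_nonpos hα hγ (hcayley ▸ hdisc) t).trans_eq (by ring)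

theorem forall_ne_rel_of_exchange {α : Type*} {r : α → α → Prop}
    (hsymm : ∀ {a b}, r a b → r b a)
    (hexch : ∀ {a b c}, a ≠ b → a ≠ c → b ≠ c → r a b → r b c) {e f : α} (hef : e ≠ f)
    (hr : r e f) {g h : α} (hgh : g ≠ h) : r g h := by
  have he : ∀ k, e ≠ k → r e k := fun k hek => by
    by_cases hkf : k = f
    · exact hkf ▸ hr
    · exact hexch hef.symm (Ne.symm hkf) hek (hsymm hr)
  by_cases hge : g = e
  · exact hge ▸ he h (hge ▸ hgh)
  by_cases hhe : h = e
  · exact hhe ▸ hsymm (he g (Ne.symm hge))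
  exact hexch (Ne.symm hge) (Ne.symm hhe) hgh (he g (Ne.symm hge))

section

variable {m : ℕ}

theorem pderiv_del {i j : Fin m} (hji : j ≠ i) (p : MvPolynomial (Fin m) ℝ) :
    pderiv j (del i p) = del i (pderiv j p) := by
  set φ : MvPolynomial (Fin m) ℝ →ₐ[ℝ] MvPolynomial (Fin m) ℝ :=
    aeval fun k => if k = i then 0 else X k
  change pderiv j (φ p) = φ (pderiv j p)
  induction p using MvPolynomial.induction_on with
  | C a => simp [φ]
  | add p q hp hq => rw [map_add, map_add, map_add, hp, hq, map_add]
  | mul_X p k ih =>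
    rw [map_mul, pderiv_mul, ih, pderiv_mul, map_add, map_mul, map_mul]
    by_cases hki : k = i <;> by_cases hkj : k = j <;>
      simp [φ, hki, hkj, hji, hji.symm, pderiv_X]

theorem eval_del (i : Fin m) (p : MvPolynomial (Fin m) ℝ) (x : Fin m → ℝ) :
    eval x (del i p) = eval (Function.update x i 0) p := by
  rw [del, aeval_eq_bind₁]
  refine (eval₂Hom_bind₁ _ _ _ _).trans (congrArg (eval · p) (funext fun j => ?_))
  by_cases hji : j = i <;> simp [hji]

theorem multiaffine_pderiv {W : MvPolynomial (Fin m) ℝ} (hW : Multiaffine W) (i : Fin m) :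
    Multiaffine (pderiv i W) :=
  fun j => (degreeOf_pderiv_le i j W).trans (hW j)

theorem Ray_comm (b c : Fin m) (W : MvPolynomial (Fin m) ℝ) : Ray b c W = Ray c b W := by
  rw [Ray, Ray, pderiv_comm c b]
  ring

theorem Ray_del {i b c : Fin m} (hbi : b ≠ i) (hci : c ≠ i) (W : MvPolynomial (Fin m) ℝ) :
    Ray b c (del i W) = del i (Ray b c W) := by
  simp only [Ray, pderiv_del hbi, pderiv_del hci]
  simp only [del, map_sub, map_mul]

theorem Multiaffine.notMem_vars_Ray_left {W : MvPolynomial (Fin m) ℝ} (hW : Multiaffine W)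
    (b c : Fin m) : b ∉ (Ray b c W).vars := by
  have hbb : pderiv b (pderiv b W) = 0 :=
    pderiv_eq_zero_of_notMem_vars (notMem_vars_pderiv_self (hW b))
  refine notMem_vars_of_pderiv_eq_zero ?_
  simp only [Ray, map_sub, pderiv_mul, pderiv_comm b c W, pderiv_comm b c (pderiv b W), hbb,
    map_zero]
  ring

theorem Multiaffine.eval_update_Ray {W : MvPolynomial (Fin m) ℝ} (hW : Multiaffine W)
    (i b c : Fin m) {x : Fin m → ℝ} (hx : x i = 0) (t : ℝ) :
    eval (Function.update x i t) (Ray b c W) =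
      (eval x (pderiv b W) + t * eval x (pderiv i (pderiv b W))) *
          (eval x (pderiv c W) + t * eval x (pderiv i (pderiv c W))) -
        (eval x (pderiv c (pderiv b W)) + t * eval x (pderiv i (pderiv c (pderiv b W)))) *
          (eval x W + t * eval x (pderiv i W)) := by
  simp only [Ray, map_sub, map_mul, eval_update_of_degreeOf_le_one (hW i) hx,
    eval_update_of_degreeOf_le_one (multiaffine_pderiv hW _ i) hx,
    eval_update_of_degreeOf_le_one (multiaffine_pderiv (multiaffine_pderiv hW _) _ i) hx]

def RayNonneg (b c : Fin m) (W : MvPolynomial (Fin m) ℝ) : Prop :=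
  ∀ y : Fin m → ℝ, 0 ≤ eval y (Ray b c W)

theorem RayNonneg.symm {b c : Fin m} {W : MvPolynomial (Fin m) ℝ} (h : RayNonneg b c W) :
    RayNonneg c b W := by
  simpa only [RayNonneg, Ray_comm c b] using h

/-- Lemma 2 of Wagner–Wei. -/
theorem Multiaffine.rayNonneg_exchange {Z : MvPolynomial (Fin m) ℝ} (hZ : Multiaffine Z)
    {a b c : Fin m} (hab : a ≠ b) (hac : a ≠ c) (hderiv : RayNonneg b c (pderiv a Z))
    (hdel : RayNonneg b c (del a Z)) (h : RayNonneg a b Z) : RayNonneg b c Z := by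
  intro y
  set y₀ := Function.update (Function.update (Function.update y a 0) b 0) c 0
  have hy₀a : y₀ a = 0 := by simp [y₀, hab, hac]
  have hy₀c : y₀ c = 0 := by simp [y₀]
  -- `ΔZ{b,c}` does not involve `y_b` or `y_c`, so these may be set to `0`
  have hy : eval y (Ray b c Z) = eval (Function.update y₀ a (y a)) (Ray b c Z) := by
    refine eval_congr_of_vars fun k hk => ?_
    have hkb : k ≠ b := ne_of_mem_of_not_mem hk (hZ.notMem_vars_Ray_left b c)
    have hkc : k ≠ c := ne_of_mem_of_not_mem hk (Ray_comm b c Z ▸ hZ.notMem_vars_Ray_left c b)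
    by_cases hka : k = a <;> simp [y₀, hka, hkb, hkc]
  have hα := hderiv y₀
  have hγ := hdel y₀
  have hquad := fun v => h (Function.update y₀ c v)
  rw [Ray_del hab.symm hac.symm, eval_del, Function.update_eq_self_iff.mpr hy₀a.symm] at hγ
  simp only [hZ.eval_update_Ray c a b hy₀c] at hquad
  simp only [Ray, map_sub, map_mul] at hα hγ
  simp only [pderiv_comm b a, pderiv_comm c a] at hα hquad
  rw [hy, hZ.eval_update_Ray a b c hy₀a]
  exact rayleigh_quadratic_nonneg hquad hα hγ (y a)

end

theorem theorem_three_c_implies_b_general {m : ℕ} (Z : MvPolynomial (Fin m) ℝ)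
    (hZ : Multiaffine Z)
    (hminors : ∀ e : Fin m, StrongRayleigh (pderiv e Z) ∧ StrongRayleigh (del e Z))
    (e f : Fin m) (hef : e ≠ f)
    (hΔ : ∀ y : Fin m → ℝ, 0 ≤ eval y (Ray e f Z)) :
    StrongRayleigh Z := by
  intro g h hgh
  exact forall_ne_rel_of_exchange (r := fun a b => RayNonneg a b Z) RayNonneg.symm
    (fun hab hac hbc =>
      hZ.rayNonneg_exchange hab hac ((hminors _).1 _ _ hbc) ((hminors _).2 _ _ hbc))
    hef hΔ hgh

theorem theorem_three_c_implies_b {m : ℕ} (Z : MvPolynomial (Fin m) ℝ)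
    (hZ : Multiaffine Z)
    (hpos : ∀ d, Z.coeff d ≠ 0 → 0 < Z.coeff d)
    (hminors : ∀ e : Fin m, StrongRayleigh (pderiv e Z) ∧ StrongRayleigh (del e Z))
    (e f : Fin m) (hef : e ≠ f)
    (hΔ : ∀ y : Fin m → ℝ, 0 ≤ eval y (Ray e f Z)) :
    StrongRayleigh Z :=
  theorem_three_c_implies_b_general Z hZ hminors e f hef hΔ
end

section
/- Let Z be a multiaffine real polynomial with the strong Rayleigh property and positive coefficients. Then for any index g, both Z_g and Z^g have the strong Rayleigh property. -/
open MvPolynomial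

/-! ### Auxiliary lemmas -/

lemma quad_aux (a b c : ℝ) (H : ∀ t : ℝ, 0 ≤ a * t ^ 2 + b * t + c) : 0 ≤ a ∧ 0 ≤ c := by
  refine ⟨?_, by simpa using H 0⟩
  by_contra h
  push_neg at h
  have hna : 0 < -a := neg_pos.mpr h
  set t := Real.sqrt ((|c| + 1) / (-a)) with ht
  have h2 : t ^ 2 = (|c| + 1) / (-a) :=
    Real.sq_sqrt (le_of_lt (div_pos (by positivity) hna))
  have h3 : a * t ^ 2 = -(|c| + 1) := by
    rw [h2, mul_div_assoc', div_eq_iff (ne_of_gt hna)]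
    ring
  have h4 := H t
  have h5 := H (-t)
  nlinarith [le_abs_self c]

lemma pderiv_support_exists {m : ℕ} (e : Fin m) (p : MvPolynomial (Fin m) ℝ)
    {d : Fin m →₀ ℕ} (hd : d ∈ (pderiv e p).support) :
    ∃ v ∈ p.support, d = v - Finsupp.single e 1 := by
  classical
  rw [p.as_sum, map_sum] at hd
  obtain ⟨v, hv, hdv⟩ := Finset.mem_biUnion.mp (MvPolynomial.support_sum hd)
  rw [pderiv_monomial] at hdv
  exact ⟨v, hv, Finset.mem_singleton.mp (support_monomial_subset hdv)⟩

lemma pderiv_supp_zero {m : ℕ} {g e : Fin m} {p : MvPolynomial (Fin m) ℝ}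
    (hp : ∀ d ∈ p.support, d g = 0) :
    ∀ d ∈ (pderiv e p).support, d g = 0 := by
  intro d hd
  obtain ⟨v, hv, rfl⟩ := pderiv_support_exists e p hd
  have := hp v hv
  simp [Finsupp.tsub_apply, this]

lemma pderiv_g_supp {m : ℕ} {g : Fin m} {Z : MvPolynomial (Fin m) ℝ}
    (hZ : ∀ d ∈ Z.support, d g ≤ 1) :
    ∀ d ∈ (pderiv g Z).support, d g = 0 := by
  intro d hd
  obtain ⟨v, hv, rfl⟩ := pderiv_support_exists g Z hd
  have := hZ v hv
  simp [Finsupp.tsub_apply, Finsupp.single_apply]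
  omega

lemma pd_zero {m : ℕ} {g : Fin m} {p : MvPolynomial (Fin m) ℝ}
    (hp : ∀ d ∈ p.support, d g = 0) : pderiv g p = 0 := by
  apply pderiv_eq_zero_of_notMem_vars
  intro h
  obtain ⟨d, hd, hgd⟩ := (mem_vars g).mp h
  exact (Finsupp.mem_support_iff.mp hgd) (hp d hd)

lemma del_monomial {m : ℕ} (g : Fin m) (v : Fin m →₀ ℕ) (c : ℝ) :
    del g (monomial v c) = if v g = 0 then monomial v c else 0 := by
  classical
  rw [del, aeval_monomial, Finsupp.prod]
  split_ifs with h
  · have hg : g ∉ v.support := by simp [Finsupp.mem_support_iff, h]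
    have hprod : (∏ x ∈ v.support, (if x = g then (0 : MvPolynomial (Fin m) ℝ) else X x) ^ v x)
        = ∏ x ∈ v.support, (X x : MvPolynomial (Fin m) ℝ) ^ v x :=
      Finset.prod_congr rfl fun i hi => by
        have hig : i ≠ g := by rintro rfl; exact hg hi
        rw [if_neg hig]
    rw [hprod, prod_X_pow_eq_monomial, algebraMap_eq, C_mul_monomial, mul_one]
  · have hg : g ∈ v.support := Finsupp.mem_support_iff.mpr h
    rw [Finset.prod_eq_zero hg (by simp [zero_pow h]), mul_zero]

lemma del_supp {m : ℕ} (g : Fin m) (p : MvPolynomial (Fin m) ℝ) :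
    ∀ d ∈ (del g p).support, d g = 0 := by
  classical
  intro d hd
  have hrw : del g p = ∑ v ∈ p.support, del g (monomial v (coeff v p)) := by
    simp only [del]
    rw [← map_sum, ← p.as_sum]
  rw [hrw] at hd
  obtain ⟨v, hv, hdv⟩ := Finset.mem_biUnion.mp (MvPolynomial.support_sum hd)
  rw [del_monomial] at hdv
  split_ifs at hdv with h
  · have := Finset.mem_singleton.mp (support_monomial_subset hdv)
    subst this
    exact h
  · simp at hdv

lemma key_decomp {m : ℕ} (g : Fin m) (Z : MvPolynomial (Fin m) ℝ)
    (hZ : ∀ d ∈ Z.support, d g ≤ 1) : Z = del g Z + X g * pderiv g Z := by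
  classical
  conv_lhs => rw [Z.as_sum]
  conv_rhs => rw [Z.as_sum]
  rw [del, map_sum, map_sum, Finset.mul_sum, ← Finset.sum_add_distrib]
  refine Finset.sum_congr rfl fun v hv => ?_
  have hv1 : v g ≤ 1 := hZ v hv
  rw [show (aeval fun i => if i = g then (0 : MvPolynomial (Fin m) ℝ) else X i)
        ((monomial v) (coeff v Z)) = del g (monomial v (coeff v Z)) from rfl,
      del_monomial, pderiv_monomial]
  rcases Nat.le_one_iff_eq_zero_or_eq_one.mp hv1 with h0 | h1
  · rw [if_pos h0, h0]
    simp
  · rw [if_neg (by omega), zero_add]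
    have hv' : Finsupp.single g 1 + (v - Finsupp.single g 1) = v := by
      ext i
      by_cases hig : i = g
      · subst hig
        simp [h1]
      · simp [Finsupp.single_apply, hig, Finsupp.tsub_apply, Ne.symm hig]
    have hX : (X g : MvPolynomial (Fin m) ℝ) = monomial (Finsupp.single g 1) 1 := rfl
    rw [hX, monomial_mul, hv']
    simp [h1]

lemma eval_update_eq {m : ℕ} {g : Fin m} {p : MvPolynomial (Fin m) ℝ}
    (hp : ∀ d ∈ p.support, d g = 0) (y : Fin m → ℝ) (t : ℝ) :
    eval (Function.update y g t) p = eval y p := by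
  rw [eval_eq, eval_eq]
  refine Finset.sum_congr rfl fun d hd => ?_
  congr 1
  refine Finset.prod_congr rfl fun i hi => ?_
  have hig : i ≠ g := fun h => (Finsupp.mem_support_iff.mp hi) (h ▸ hp d hd)
  rw [Function.update_of_ne hig]

lemma master {m : ℕ} (g e f : Fin m) (Z : MvPolynomial (Fin m) ℝ)
    (hZ1 : ∀ d ∈ Z.support, d g ≤ 1) (hSR : StrongRayleigh Z)
    (hef : e ≠ f) (he : e ≠ g) (hf : f ≠ g) (y : Fin m → ℝ) :
    0 ≤ eval y (Ray e f (pderiv g Z)) ∧ 0 ≤ eval y (Ray e f (del g Z)) := by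
  set D := del g Z with hDdef
  set P := pderiv g Z with hPdef
  have hD : ∀ d ∈ D.support, d g = 0 := del_supp g Z
  have hP : ∀ d ∈ P.support, d g = 0 := pderiv_g_supp hZ1
  have key : Z = D + X g * P := key_decomp g Z hZ1
  have hde : pderiv e Z = pderiv e D + X g * pderiv e P := by
    conv_lhs => rw [key]
    rw [map_add, pderiv_mul, pderiv_X_of_ne (Ne.symm he), zero_mul, zero_add]
  have hdf : pderiv f Z = pderiv f D + X g * pderiv f P := by
    conv_lhs => rw [key]
    rw [map_add, pderiv_mul, pderiv_X_of_ne (Ne.symm hf), zero_mul, zero_add]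
  have hdef : pderiv f (pderiv e Z) = pderiv f (pderiv e D) + X g * pderiv f (pderiv e P) := by
    rw [hde, map_add, pderiv_mul, pderiv_X_of_ne (Ne.symm hf), zero_mul, zero_add]
  have Qt : ∀ t : ℝ, eval (Function.update y g t) (Ray e f Z)
      = (eval y (pderiv e P) * eval y (pderiv f P)
          - eval y (pderiv f (pderiv e P)) * eval y P) * t ^ 2
        + (eval y (pderiv e D) * eval y (pderiv f P) + eval y (pderiv e P) * eval y (pderiv f D)
          - eval y (pderiv f (pderiv e D)) * eval y P
          - eval y (pderiv f (pderiv e P)) * eval y D) * t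
        + (eval y (pderiv e D) * eval y (pderiv f D)
          - eval y (pderiv f (pderiv e D)) * eval y D) := by
    intro t
    have h1 := eval_update_eq (pderiv_supp_zero hD (e := e)) y t
    have h2 := eval_update_eq (pderiv_supp_zero hP (e := e)) y t
    have h3 := eval_update_eq (pderiv_supp_zero hD (e := f)) y t
    have h4 := eval_update_eq (pderiv_supp_zero hP (e := f)) y t
    have h5 := eval_update_eq (pderiv_supp_zero (pderiv_supp_zero hD (e := e)) (e := f)) y t
    have h6 := eval_update_eq (pderiv_supp_zero (pderiv_supp_zero hP (e := e)) (e := f)) y t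
    have h7 := eval_update_eq hD y t
    have h8 := eval_update_eq hP y t
    rw [Ray, hdef, hde, hdf]
    conv_lhs => rw [key]
    simp only [map_sub, map_mul, map_add, eval_X, Function.update_self, h1, h2, h3, h4, h5,
      h6, h7, h8]
    ring
  have H : ∀ t : ℝ, 0 ≤ (eval y (pderiv e P) * eval y (pderiv f P)
          - eval y (pderiv f (pderiv e P)) * eval y P) * t ^ 2
        + (eval y (pderiv e D) * eval y (pderiv f P) + eval y (pderiv e P) * eval y (pderiv f D)
          - eval y (pderiv f (pderiv e D)) * eval y P
          - eval y (pderiv f (pderiv e P)) * eval y D) * t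
        + (eval y (pderiv e D) * eval y (pderiv f D)
          - eval y (pderiv f (pderiv e D)) * eval y D) := by
    intro t
    rw [← Qt t]
    exact hSR e f hef _
  obtain ⟨hA, hC⟩ := quad_aux _ _ _ H
  constructor
  · simpa only [Ray, map_sub, map_mul] using hA
  · simpa only [Ray, map_sub, map_mul] using hC

theorem strong_rayleigh_minors {m : ℕ} (Z : MvPolynomial (Fin m) ℝ)
    (hZ : Multiaffine Z)
    (hpos : ∀ d, Z.coeff d ≠ 0 → 0 < Z.coeff d)
    (hSR : StrongRayleigh Z) (g : Fin m) :
    StrongRayleigh (pderiv g Z) ∧ StrongRayleigh (del g Z) := by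
  have hZ1 : ∀ d ∈ Z.support, d g ≤ 1 := degreeOf_le_iff.mp (hZ g)
  have hP : ∀ d ∈ (pderiv g Z).support, d g = 0 := pderiv_g_supp hZ1
  have hD : ∀ d ∈ (del g Z).support, d g = 0 := del_supp g Z
  constructor
  · intro e f hef y
    rcases eq_or_ne e g with rfl | he
    · have h0 : pderiv e (pderiv e Z) = 0 := pd_zero hP
      simp [Ray, h0]
    · rcases eq_or_ne f g with rfl | hf
      · have h0 : pderiv f (pderiv f Z) = 0 := pd_zero hP
        have h1 : pderiv f (pderiv e (pderiv f Z)) = 0 := pd_zero (pderiv_supp_zero hP)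
        simp [Ray, h0, h1]
      · exact (master g e f Z hZ1 hSR hef he hf y).1
  · intro e f hef y
    rcases eq_or_ne e g with rfl | he
    · have h0 : pderiv e (del e Z) = 0 := pd_zero hD
      simp [Ray, h0]
    · rcases eq_or_ne f g with rfl | hf
      · have h0 : pderiv f (del f Z) = 0 := pd_zero hD
        have h1 : pderiv f (pderiv e (del f Z)) = 0 := pd_zero (pderiv_supp_zero hD)
        simp [Ray, h0, h1]
      · exact (master g e f Z hZ1 hSR hef he hf y).2
end
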